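/- arXiv:2010.12843 — 2 statements merged into one kernel-verified Lean document; each statement's English description precedes it below -/
import Mathlib

section
/- There exists a constant C > 0, depending only on M, such that for every smooth function f on a neighbourhood of the closure of M one has |f²|_{L⁴_x L³_z} ≤ C |f|_{L⁶}^{3/2} ‖f³‖^{1/6}, where f² and f³ denote the pointwise square and cube of f and ‖f³‖ is the H¹(M) norm of f³. -/
/-!
Write `g = f³` and `H(x,y) = ∫ g(x,y,z)² dz`, so that `|f²|_{L⁴_x L³_z}⁴ = ∫∫ H^{4/3}` and
`∫∫ H = |f|_{L⁶}⁶`. Hölder's inequality in `(x,y)` gives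
`∫∫ H^{4/3} ≤ (∫∫ H)^{2/3} (∫∫ H²)^{1/3}`. For the last factor, comparing `H(x,y)` with its mean
in `y` and using the fundamental theorem of calculus with `∂_y g² = 2 g ∂_y g` gives
`H(x,y) ≤ B(x) := L⁻¹ ∫ H(x,t) dt + 2 ∫∫ |g| |∂_y g| dt dz`, and symmetrically `H(x,y) ≤ A(y)`;
hence `∫∫ H² ≤ (∫ B)(∫ A)`, and Cauchy–Schwarz bounds `∫ A` and `∫ B` by `(L⁻¹ + 2) |g| ‖g‖`.
-/

open MeasureTheory Set

noncomputable section

/-- The domain `M = (0,L) × (0,L) × (-h,0) ⊆ ℝ³`. -/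
def Mset (L h : ℝ) : Set (ℝ × ℝ × ℝ) := Ioo 0 L ×ˢ Ioo 0 L ×ˢ Ioo (-h) 0

/-- `f` is smooth on an open neighbourhood of the closure of `M`. -/
def SmoothNearM (L h : ℝ) (f : ℝ → ℝ → ℝ → ℝ) : Prop :=
  ∃ U : Set (ℝ × ℝ × ℝ), IsOpen U ∧ closure (Mset L h) ⊆ U ∧
    ContDiffOn ℝ (⊤ : ℕ∞) (fun p : ℝ × ℝ × ℝ => f p.1 p.2.1 p.2.2) U

/-- Partial derivative in `x`. -/
def pdx (f : ℝ → ℝ → ℝ → ℝ) : ℝ → ℝ → ℝ → ℝ := fun x y z => deriv (fun t => f t y z) x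
/-- Partial derivative in `y`. -/
def pdy (f : ℝ → ℝ → ℝ → ℝ) : ℝ → ℝ → ℝ → ℝ := fun x y z => deriv (fun t => f x t z) y
/-- Partial derivative in `z`. -/
def pdz (f : ℝ → ℝ → ℝ → ℝ) : ℝ → ℝ → ℝ → ℝ := fun x y z => deriv (fun t => f x y t) z

/-- Iterated integral over `M`. -/
def intM (L h : ℝ) (g : ℝ → ℝ → ℝ → ℝ) : ℝ :=
  ∫ x in Ioo (0:ℝ) L, ∫ y in Ioo (0:ℝ) L, ∫ z in Ioo (-h) (0:ℝ), g x y z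

/-- Square of the `L²(M)` norm. -/
def sqL2 (L h : ℝ) (f : ℝ → ℝ → ℝ → ℝ) : ℝ := intM L h fun x y z => (f x y z) ^ 2

/-- The `L²(M)` norm `|f|`. -/
def L2norm (L h : ℝ) (f : ℝ → ℝ → ℝ → ℝ) : ℝ := Real.sqrt (sqL2 L h f)

/-- The `L^p(M)` norm. -/
def LpNorm (L h p : ℝ) (f : ℝ → ℝ → ℝ → ℝ) : ℝ :=
  (intM L h fun x y z => |f x y z| ^ p) ^ (1 / p)

/-- Square of the `L²(M)` norm of the full (three-dimensional) gradient. -/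
def gradSq (L h : ℝ) (f : ℝ → ℝ → ℝ → ℝ) : ℝ :=
  sqL2 L h (pdx f) + sqL2 L h (pdy f) + sqL2 L h (pdz f)

/-- The `L²(M)` norm of the full (three-dimensional) gradient `|∇₃ f|_{L²}`. -/
def gradL2 (L h : ℝ) (f : ℝ → ℝ → ℝ → ℝ) : ℝ := Real.sqrt (gradSq L h f)

/-- The `H¹(M)` norm `‖f‖ = (|f|² + |∇₃ f|²)^{1/2}`. -/
def H1norm (L h : ℝ) (f : ℝ → ℝ → ℝ → ℝ) : ℝ :=
  Real.sqrt (sqL2 L h f + gradSq L h f)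

/-- The anisotropic norm `|f|_{L^q_x L^p_z}`. -/
def anisoNorm (L h q p : ℝ) (f : ℝ → ℝ → ℝ → ℝ) : ℝ :=
  (∫ x in Ioo (0:ℝ) L, ∫ y in Ioo (0:ℝ) L,
    (∫ z in Ioo (-h) (0:ℝ), |f x y z| ^ p) ^ (q / p)) ^ (1 / q)

open Function
open scoped Interval

namespace AnisotropicEstimate

lemma continuousOn_setIntegral_Ioo {α : Type*} [TopologicalSpace α] [FirstCountableTopology α]
    {K : Set α} (hK : IsCompact K) {c d : ℝ} {F : α → ℝ → ℝ}
    (hF : ContinuousOn (uncurry F) (K ×ˢ Icc c d)) :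
    ContinuousOn (fun p => ∫ z in Ioo c d, F p z) K := by
  intro p hp
  obtain ⟨C, hC⟩ := (hK.prod isCompact_Icc).exists_bound_of_continuousOn hF
  refine continuousWithinAt_of_dominated (bound := fun _ => C) ?_ ?_
    (integrableOn_const measure_Ioo_lt_top.ne) ?_
  · filter_upwards [self_mem_nhdsWithin] with x hx
    exact ((hF.uncurry_left x hx).mono Ioo_subset_Icc_self).aestronglyMeasurable
      measurableSet_Ioo
  · filter_upwards [self_mem_nhdsWithin] with x hx
    filter_upwards [self_mem_ae_restrict measurableSet_Ioo] with z hz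
    exact hC (x, z) ⟨hx, Ioo_subset_Icc_self hz⟩
  · filter_upwards [self_mem_ae_restrict measurableSet_Ioo] with z hz
    exact hF.uncurry_right z (Ioo_subset_Icc_self hz) p hp

lemma _root_.ContinuousOn.memLp_Ioo {a b : ℝ} {u : ℝ → ℝ} (hu : ContinuousOn u (Icc a b))
    (p : ENNReal) : MemLp u p (volume.restrict (Ioo a b)) := by
  obtain ⟨C, hC⟩ := isCompact_Icc.exists_bound_of_continuousOn hu
  have : IsFiniteMeasure (volume.restrict (Ioo a b)) := ⟨by simp⟩
  refine MemLp.of_bound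
    ((hu.mono Ioo_subset_Icc_self).aestronglyMeasurable measurableSet_Ioo) C ?_
  filter_upwards [self_mem_ae_restrict measurableSet_Ioo] with x hx
  exact hC x (Ioo_subset_Icc_self hx)

-- Stated with a pointwise majorant so that it can be iterated over the coordinates.
lemma setIntegral_Ioo_le_rpow_mul_rpow {p q : ℝ} (hpq : p.HolderConjugate q) {a b : ℝ}
    {F U V : ℝ → ℝ} (hF : ContinuousOn F (Icc a b)) (hU : ContinuousOn U (Icc a b))
    (hV : ContinuousOn V (Icc a b)) (hU0 : ∀ x ∈ Icc a b, 0 ≤ U x)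
    (hV0 : ∀ x ∈ Icc a b, 0 ≤ V x) (hle : ∀ x ∈ Icc a b, F x ≤ U x ^ p⁻¹ * V x ^ q⁻¹) :
    ∫ x in Ioo a b, F x ≤ (∫ x in Ioo a b, U x) ^ p⁻¹ * (∫ x in Ioo a b, V x) ^ q⁻¹ := by
  have hUp : ContinuousOn (fun x => U x ^ p⁻¹) (Icc a b) :=
    hU.rpow_const fun _ _ => Or.inr (inv_nonneg.2 hpq.nonneg)
  have hVq : ContinuousOn (fun x => V x ^ q⁻¹) (Icc a b) :=
    hV.rpow_const fun _ _ => Or.inr (inv_nonneg.2 hpq.symm.nonneg)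
  have hnonneg : ∀ {W : ℝ → ℝ} {r : ℝ}, (∀ x ∈ Icc a b, 0 ≤ W x) →
      0 ≤ᵐ[volume.restrict (Ioo a b)] fun x => W x ^ r⁻¹ := fun hW0 => by
    filter_upwards [self_mem_ae_restrict measurableSet_Ioo] with x hx
    exact Real.rpow_nonneg (hW0 x (Ioo_subset_Icc_self hx)) _
  have hcancel : ∀ {W : ℝ → ℝ} {r : ℝ}, r ≠ 0 → (∀ x ∈ Icc a b, 0 ≤ W x) →
      ∫ x in Ioo a b, (W x ^ r⁻¹) ^ r = ∫ x in Ioo a b, W x := fun hr hW0 =>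
    setIntegral_congr_fun measurableSet_Ioo fun x hx =>
      Real.rpow_inv_rpow (hW0 x (Ioo_subset_Icc_self hx)) hr
  calc ∫ x in Ioo a b, F x ≤ ∫ x in Ioo a b, U x ^ p⁻¹ * V x ^ q⁻¹ :=
        setIntegral_mono_on ((hF.integrableOn_Icc).mono_set Ioo_subset_Icc_self)
          (((hUp.mul hVq).integrableOn_Icc).mono_set Ioo_subset_Icc_self) measurableSet_Ioo
          fun x hx => hle x (Ioo_subset_Icc_self hx)
    _ ≤ (∫ x in Ioo a b, (U x ^ p⁻¹) ^ p) ^ (1 / p) *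
          (∫ x in Ioo a b, (V x ^ q⁻¹) ^ q) ^ (1 / q) :=
        integral_mul_le_Lp_mul_Lq_of_nonneg hpq (hnonneg hU0) (hnonneg hV0)
          (hUp.memLp_Ioo _) (hVq.memLp_Ioo _)
    _ = _ := by
        rw [hcancel hpq.ne_zero hU0, hcancel hpq.symm.ne_zero hV0, one_div, one_div]

lemma le_add_setIntegral_Ioo_abs_deriv {a b : ℝ} {u u' : ℝ → ℝ}
    (hu : ∀ x ∈ Icc a b, HasDerivAt u (u' x) x) (hu' : ContinuousOn u' (Icc a b))
    {x x₀ : ℝ} (hx : x ∈ Icc a b) (hx₀ : x₀ ∈ Icc a b) :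
    u x ≤ u x₀ + ∫ t in Ioo a b, |u' t| := by
  have hsub : uIcc x₀ x ⊆ Icc a b := uIcc_subset_Icc hx₀ hx
  have hftc : ∫ t in x₀..x, u' t = u x - u x₀ :=
    intervalIntegral.integral_eq_sub_of_hasDerivAt (fun t ht => hu t (hsub ht))
      ((hu'.mono hsub).intervalIntegrable)
  calc u x = u x₀ + ∫ t in x₀..x, u' t := by rw [hftc]; ring
    _ ≤ u x₀ + ∫ t in Ι x₀ x, ‖u' t‖ := by
        gcongr
        exact (Real.le_norm_self _).trans intervalIntegral.norm_integral_le_integral_norm_uIoc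
    _ ≤ u x₀ + ∫ t in Icc a b, |u' t| := by
        gcongr
        refine setIntegral_mono_set (hu'.abs.integrableOn_Icc (μ := volume)) ?_ ?_
        · exact ae_of_all _ fun t => abs_nonneg _
        · exact (uIoc_subset_uIcc.trans hsub).eventuallyLE
    _ = u x₀ + ∫ t in Ioo a b, |u' t| := by rw [integral_Icc_eq_integral_Ioo]

lemma exists_mem_Icc_le_average {a b : ℝ} (hab : a < b) {u : ℝ → ℝ}
    (hu : ContinuousOn u (Icc a b)) :
    ∃ x₀ ∈ Icc a b, u x₀ ≤ (b - a)⁻¹ * ∫ x in Ioo a b, u x := by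
  obtain ⟨x₀, hx₀, hle⟩ := exists_le_setAverage (μ := volume)
    (by simpa [Real.volume_Ioo] using hab) measure_Ioo_lt_top.ne
    ((hu.integrableOn_Icc).mono_set Ioo_subset_Icc_self)
  refine ⟨x₀, Ioo_subset_Icc_self hx₀, ?_⟩
  rwa [setAverage_eq, Real.volume_real_Ioo_of_le hab.le, smul_eq_mul] at hle

lemma setIntegral_Ioo_comm {a b c d : ℝ} {F : ℝ → ℝ → ℝ}
    (hF : ContinuousOn (uncurry F) (Icc a b ×ˢ Icc c d)) :
    ∫ x in Ioo a b, ∫ y in Ioo c d, F x y = ∫ y in Ioo c d, ∫ x in Ioo a b, F x y := by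
  refine integral_integral_swap ?_
  rw [Measure.prod_restrict, ← Measure.volume_eq_prod]
  exact (hF.integrableOn_compact (isCompact_Icc.prod isCompact_Icc)).mono_set
    (prod_mono Ioo_subset_Icc_self Ioo_subset_Icc_self)

lemma integral_Ioo_Ioo_le_rpow_mul_rpow {p q : ℝ} (hpq : p.HolderConjugate q) {a b c d : ℝ}
    {F U V : ℝ → ℝ → ℝ} (hF : ContinuousOn (uncurry F) (Icc a b ×ˢ Icc c d))
    (hU : ContinuousOn (uncurry U) (Icc a b ×ˢ Icc c d))
    (hV : ContinuousOn (uncurry V) (Icc a b ×ˢ Icc c d))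
    (hU0 : ∀ x ∈ Icc a b, ∀ y ∈ Icc c d, 0 ≤ U x y)
    (hV0 : ∀ x ∈ Icc a b, ∀ y ∈ Icc c d, 0 ≤ V x y)
    (hle : ∀ x ∈ Icc a b, ∀ y ∈ Icc c d, F x y ≤ U x y ^ p⁻¹ * V x y ^ q⁻¹) :
    ∫ x in Ioo a b, ∫ y in Ioo c d, F x y ≤
      (∫ x in Ioo a b, ∫ y in Ioo c d, U x y) ^ p⁻¹ *
        (∫ x in Ioo a b, ∫ y in Ioo c d, V x y) ^ q⁻¹ := by
  have hint0 : ∀ {W : ℝ → ℝ → ℝ}, (∀ x ∈ Icc a b, ∀ y ∈ Icc c d, 0 ≤ W x y) →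
      ∀ x ∈ Icc a b, 0 ≤ ∫ y in Ioo c d, W x y := fun hW0 x hx =>
    setIntegral_nonneg measurableSet_Ioo fun y hy => hW0 x hx y (Ioo_subset_Icc_self hy)
  refine setIntegral_Ioo_le_rpow_mul_rpow hpq (continuousOn_setIntegral_Ioo isCompact_Icc hF)
    (continuousOn_setIntegral_Ioo isCompact_Icc hU)
    (continuousOn_setIntegral_Ioo isCompact_Icc hV) (hint0 hU0) (hint0 hV0) fun x hx => ?_
  exact setIntegral_Ioo_le_rpow_mul_rpow hpq (hF.uncurry_left x hx) (hU.uncurry_left x hx)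
    (hV.uncurry_left x hx) (hU0 x hx) (hV0 x hx) (hle x hx)

lemma integral_Ioo_Ioo_rpow_four_thirds_le {a b c d : ℝ} {H : ℝ → ℝ → ℝ}
    (hH : ContinuousOn (uncurry H) (Icc a b ×ˢ Icc c d))
    (hH0 : ∀ x ∈ Icc a b, ∀ y ∈ Icc c d, 0 ≤ H x y) :
    ∫ x in Ioo a b, ∫ y in Ioo c d, H x y ^ (4 / 3 : ℝ) ≤
      (∫ x in Ioo a b, ∫ y in Ioo c d, H x y) ^ (2 / 3 : ℝ) *
        (∫ x in Ioo a b, ∫ y in Ioo c d, H x y ^ 2) ^ (1 / 3 : ℝ) := by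
  have hpq : Real.HolderConjugate (3 / 2) 3 := ⟨by norm_num, by norm_num, by norm_num⟩
  have hsplit : ∀ w : ℝ, 0 ≤ w → w ^ (4 / 3 : ℝ) = w ^ (2 / 3 : ℝ) * (w ^ 2) ^ (1 / 3 : ℝ) := by
    intro w hw
    rw [← Real.rpow_natCast, ← Real.rpow_mul hw, ← Real.rpow_add' hw (by norm_num)]
    norm_num
  have h := integral_Ioo_Ioo_le_rpow_mul_rpow hpq
    (F := fun x y => H x y ^ (4 / 3 : ℝ)) (V := fun x y => H x y ^ 2)
    (fun p hp => (hH p hp).rpow_const (Or.inr (by norm_num))) hH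
    ((continuous_pow 2).comp_continuousOn hH) hH0 (fun _ _ _ _ => sq_nonneg _) fun x hx y hy => by
      rw [hsplit _ (hH0 x hx y hy)]
      norm_num
  norm_num at h ⊢
  exact h

lemma integral_Ioo_Ioo_sq_le_mul {a b c d : ℝ} {H : ℝ → ℝ → ℝ} {A B : ℝ → ℝ}
    (hH : ContinuousOn (uncurry H) (Icc a b ×ˢ Icc c d)) (hA : ContinuousOn A (Icc a b))
    (hB : ContinuousOn B (Icc c d)) (hH0 : ∀ x ∈ Icc a b, ∀ y ∈ Icc c d, 0 ≤ H x y)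
    (hHA : ∀ x ∈ Icc a b, ∀ y ∈ Icc c d, H x y ≤ A x)
    (hHB : ∀ x ∈ Icc a b, ∀ y ∈ Icc c d, H x y ≤ B y) :
    ∫ x in Ioo a b, ∫ y in Ioo c d, H x y ^ 2 ≤
      (∫ x in Ioo a b, A x) * ∫ y in Ioo c d, B y := by
  have hH2 : ContinuousOn (uncurry fun x y => H x y ^ 2) (Icc a b ×ˢ Icc c d) :=
    (continuous_pow 2).comp_continuousOn hH
  have hinner : ∀ x ∈ Icc a b, ∫ y in Ioo c d, H x y ^ 2 ≤ A x * ∫ y in Ioo c d, B y := by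
    intro x hx
    rw [← integral_const_mul]
    refine setIntegral_mono_on ((hH2.uncurry_left x hx).integrableOn_Icc.mono_set
      Ioo_subset_Icc_self) ((continuousOn_const.mul hB).integrableOn_Icc.mono_set
      Ioo_subset_Icc_self) measurableSet_Ioo fun y hy => ?_
    have hy := Ioo_subset_Icc_self hy
    rw [sq]
    exact mul_le_mul (hHA x hx y hy) (hHB x hx y hy) (hH0 x hx y hy)
      ((hH0 x hx y hy).trans (hHA x hx y hy))
  rw [← integral_mul_const]
  exact setIntegral_mono_on
    ((continuousOn_setIntegral_Ioo isCompact_Icc hH2).integrableOn_Icc.mono_set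
      Ioo_subset_Icc_self)
    ((hA.mul continuousOn_const).integrableOn_Icc.mono_set Ioo_subset_Icc_self)
    measurableSet_Ioo fun x hx => hinner x (Ioo_subset_Icc_self hx)

lemma rpow_interpolation_eq {c E N : ℝ} (hc : 0 ≤ c) (hE : 0 ≤ E) (hN : 0 ≤ N) :
    (E ^ (2 / 3 : ℝ) * (c ^ 2 * E * N ^ 2) ^ (1 / 3 : ℝ)) ^ (1 / 4 : ℝ) =
      c ^ (1 / 6 : ℝ) * E ^ (1 / 4 : ℝ) * N ^ (1 / 6 : ℝ) := by
  have hsq : ∀ {w : ℝ}, 0 ≤ w → ∀ r s : ℝ, ((w ^ 2) ^ r) ^ s = w ^ (2 * r * s) := fun hw r s => by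
    rw [← Real.rpow_natCast, ← Real.rpow_mul hw, ← Real.rpow_mul hw]
    norm_num
  have hE1 : E ^ (2 / 3 : ℝ) * E ^ (1 / 3 : ℝ) = E := by
    rw [← Real.rpow_add' hE (by norm_num)]
    norm_num
  calc (E ^ (2 / 3 : ℝ) * (c ^ 2 * E * N ^ 2) ^ (1 / 3 : ℝ)) ^ (1 / 4 : ℝ)
      = ((c ^ 2) ^ (1 / 3 : ℝ) * E * (N ^ 2) ^ (1 / 3 : ℝ)) ^ (1 / 4 : ℝ) := by
        rw [Real.mul_rpow (x := c ^ 2 * E) (by positivity) (by positivity),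
          Real.mul_rpow (x := c ^ 2) (by positivity) hE]
        congr 1
        linear_combination (c ^ 2) ^ (1 / 3 : ℝ) * (N ^ 2) ^ (1 / 3 : ℝ) * hE1
    _ = c ^ (1 / 6 : ℝ) * E ^ (1 / 4 : ℝ) * N ^ (1 / 6 : ℝ) := by
        rw [Real.mul_rpow (by positivity) (by positivity), Real.mul_rpow (by positivity) hE,
          hsq hc, hsq hN]
        norm_num

variable {L h : ℝ}

def Box (L h : ℝ) : Set (ℝ × ℝ × ℝ) := Icc 0 L ×ˢ Icc 0 L ×ˢ Icc (-h) 0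

def columnSq (h : ℝ) (g : ℝ → ℝ → ℝ → ℝ) (x y : ℝ) : ℝ := ∫ z in Ioo (-h) 0, g x y z ^ 2

lemma columnSq_nonneg (h : ℝ) (g : ℝ → ℝ → ℝ → ℝ) (x y : ℝ) : 0 ≤ columnSq h g x y :=
  integral_nonneg fun _ => sq_nonneg _

section Continuity

variable {W : ℝ → ℝ → ℝ → ℝ}

lemma continuousOn_swap (hW : ContinuousOn ↿W (Box L h)) :
    ContinuousOn ↿(fun x y z => W y x z) (Box L h) :=
  hW.comp (f := fun p : ℝ × ℝ × ℝ => (p.2.1, p.1, p.2.2)) (by fun_prop)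
    fun _ hp => ⟨hp.2.1, hp.1, hp.2.2⟩

lemma continuousOn_sq (hW : ContinuousOn ↿W (Box L h)) :
    ContinuousOn ↿(fun x y z => W x y z ^ 2) (Box L h) :=
  fun p hp => (hW p hp).pow 2

lemma continuousOn_slice_middle (hW : ContinuousOn ↿W (Box L h)) {x z : ℝ} (hx : x ∈ Icc 0 L)
    (hz : z ∈ Icc (-h) 0) : ContinuousOn (fun t => W x t z) (Icc 0 L) :=
  hW.comp (f := fun t => (x, t, z)) (by fun_prop) fun _ ht => ⟨hx, ht, hz⟩

lemma continuousOn_slice_last (hW : ContinuousOn ↿W (Box L h)) {x y : ℝ} (hx : x ∈ Icc 0 L)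
    (hy : y ∈ Icc 0 L) : ContinuousOn (W x y) (Icc (-h) 0) :=
  hW.comp (f := fun z => (x, y, z)) (by fun_prop) fun _ hz => ⟨hx, hy, hz⟩

lemma continuousOn_integral_last (hW : ContinuousOn ↿W (Box L h)) :
    ContinuousOn ↿(fun x y => ∫ z in Ioo (-h) 0, W x y z) (Icc 0 L ×ˢ Icc 0 L) :=
  continuousOn_setIntegral_Ioo (isCompact_Icc.prod isCompact_Icc)
    (hW.comp (f := fun q : (ℝ × ℝ) × ℝ => (q.1.1, q.1.2, q.2)) (by fun_prop)
      fun _ hq => ⟨hq.1.1, hq.1.2, hq.2⟩)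

lemma continuousOn_integral_last_two (hW : ContinuousOn ↿W (Box L h)) :
    ContinuousOn (fun x => ∫ y in Ioo 0 L, ∫ z in Ioo (-h) 0, W x y z) (Icc 0 L) :=
  continuousOn_setIntegral_Ioo isCompact_Icc (continuousOn_integral_last hW)

end Continuity

lemma sqL2_nonneg (W : ℝ → ℝ → ℝ → ℝ) : 0 ≤ sqL2 L h W :=
  integral_nonneg fun _ => integral_nonneg fun _ => integral_nonneg fun _ => sq_nonneg _

lemma intM_le_rpow_mul_rpow {p q : ℝ} (hpq : p.HolderConjugate q) {F U V : ℝ → ℝ → ℝ → ℝ}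
    (hF : ContinuousOn ↿F (Box L h)) (hU : ContinuousOn ↿U (Box L h))
    (hV : ContinuousOn ↿V (Box L h))
    (hU0 : ∀ x ∈ Icc 0 L, ∀ y ∈ Icc 0 L, ∀ z ∈ Icc (-h) 0, 0 ≤ U x y z)
    (hV0 : ∀ x ∈ Icc 0 L, ∀ y ∈ Icc 0 L, ∀ z ∈ Icc (-h) 0, 0 ≤ V x y z)
    (hle : ∀ x ∈ Icc 0 L, ∀ y ∈ Icc 0 L, ∀ z ∈ Icc (-h) 0,
      F x y z ≤ U x y z ^ p⁻¹ * V x y z ^ q⁻¹) :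
    intM L h F ≤ intM L h U ^ p⁻¹ * intM L h V ^ q⁻¹ := by
  have hint0 : ∀ {W : ℝ → ℝ → ℝ → ℝ}, (∀ x ∈ Icc 0 L, ∀ y ∈ Icc 0 L, ∀ z ∈ Icc (-h) 0,
      0 ≤ W x y z) → ∀ x ∈ Icc 0 L, ∀ y ∈ Icc 0 L, 0 ≤ ∫ z in Ioo (-h) 0, W x y z :=
    fun hW0 x hx y hy =>
      setIntegral_nonneg measurableSet_Ioo fun z hz => hW0 x hx y hy z (Ioo_subset_Icc_self hz)
  refine integral_Ioo_Ioo_le_rpow_mul_rpow hpq (continuousOn_integral_last hF)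
    (continuousOn_integral_last hU) (continuousOn_integral_last hV) (hint0 hU0) (hint0 hV0)
    fun x hx y hy => ?_
  exact setIntegral_Ioo_le_rpow_mul_rpow hpq (continuousOn_slice_last hF hx hy)
    (continuousOn_slice_last hU hx hy) (continuousOn_slice_last hV hx hy) (hU0 x hx y hy)
    (hV0 x hx y hy) (hle x hx y hy)

lemma intM_abs_mul_abs_le {u v : ℝ → ℝ → ℝ → ℝ} (hu : ContinuousOn ↿u (Box L h))
    (hv : ContinuousOn ↿v (Box L h)) :
    intM L h (fun x y z => |u x y z| * |v x y z|) ≤ L2norm L h u * L2norm L h v := by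
  have hpointwise : ∀ a b : ℝ, |a| * |b| ≤ (a ^ 2) ^ (2⁻¹ : ℝ) * (b ^ 2) ^ (2⁻¹ : ℝ) := by
    simp only [← one_div, ← Real.sqrt_eq_rpow, Real.sqrt_sq_eq_abs, le_refl, implies_true]
  simpa only [L2norm, sqL2, Real.sqrt_eq_rpow, one_div] using
    intM_le_rpow_mul_rpow Real.HolderConjugate.two_two (hu.abs.mul hv.abs) (continuousOn_sq hu)
      (continuousOn_sq hv)
      (fun _ _ _ _ _ _ => sq_nonneg _) (fun _ _ _ _ _ _ => sq_nonneg _)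
      fun x _ y _ z _ => hpointwise (u x y z) (v x y z)

lemma intM_swap {W : ℝ → ℝ → ℝ → ℝ} (hW : ContinuousOn ↿W (Box L h)) :
    intM L h (fun x y z => W y x z) = intM L h W :=
  setIntegral_Ioo_comm (continuousOn_integral_last (continuousOn_swap hW))

lemma L2norm_swap {W : ℝ → ℝ → ℝ → ℝ} (hW : ContinuousOn ↿W (Box L h)) :
    L2norm L h (fun x y z => W y x z) = L2norm L h W :=
  congrArg Real.sqrt (intM_swap (continuousOn_sq hW))

-- The mean of `columnSq h g x ·` plus a bound on its total variation, via `∂_y (g²) = 2 g gy`.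
def majorant (L h : ℝ) (g gy : ℝ → ℝ → ℝ → ℝ) (x : ℝ) : ℝ :=
  L⁻¹ * (∫ t in Ioo 0 L, columnSq h g x t) +
    2 * ∫ t in Ioo 0 L, ∫ z in Ioo (-h) 0, |g x t z| * |gy x t z|

lemma majorant_nonneg (hL : 0 ≤ L) (g gy : ℝ → ℝ → ℝ → ℝ) (x : ℝ) :
    0 ≤ majorant L h g gy x :=
  add_nonneg (mul_nonneg (inv_nonneg.2 hL)
      (integral_nonneg fun _ => integral_nonneg fun _ => sq_nonneg _))
    (mul_nonneg zero_le_two (integral_nonneg fun _ => integral_nonneg fun _ => by positivity))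

lemma continuousOn_majorant {g gy : ℝ → ℝ → ℝ → ℝ} (hg : ContinuousOn ↿g (Box L h))
    (hgy : ContinuousOn ↿gy (Box L h)) : ContinuousOn (majorant L h g gy) (Icc 0 L) :=
  (continuousOn_const.mul (continuousOn_integral_last_two (continuousOn_sq hg))).add
    (continuousOn_const.mul (continuousOn_integral_last_two (hg.abs.mul hgy.abs)))

lemma columnSq_le_majorant (hL : 0 < L) {g gy : ℝ → ℝ → ℝ → ℝ}
    (hg : ContinuousOn ↿g (Box L h)) (hgy : ContinuousOn ↿gy (Box L h))
    (hdy : ∀ x ∈ Icc 0 L, ∀ y ∈ Icc 0 L, ∀ z ∈ Icc (-h) 0,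
      HasDerivAt (fun t => g x t z) (gy x y z) y)
    {x y : ℝ} (hx : x ∈ Icc 0 L) (hy : y ∈ Icc 0 L) :
    columnSq h g x y ≤ majorant L h g gy x := by
  have hH : ContinuousOn (uncurry (columnSq h g)) (Icc 0 L ×ˢ Icc 0 L) :=
    continuousOn_integral_last (continuousOn_sq hg)
  obtain ⟨y₀, hy₀, havg⟩ := exists_mem_Icc_le_average hL (hH.uncurry_left x hx)
  have hD : ContinuousOn (uncurry fun z t => |g x t z| * |gy x t z|) (Icc (-h) 0 ×ˢ Icc 0 L) :=
    (hg.abs.mul hgy.abs).comp (f := fun q : ℝ × ℝ => (x, q.2, q.1)) (by fun_prop)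
      fun _ hq => ⟨hx, hq.2, hq.1⟩
  have hpointwise : ∀ z ∈ Icc (-h) 0,
      g x y z ^ 2 ≤ g x y₀ z ^ 2 + 2 * ∫ t in Ioo 0 L, |g x t z| * |gy x t z| := by
    intro z hz
    have hderiv : ∀ t ∈ Icc 0 L,
        HasDerivAt (fun t => g x t z ^ 2) (2 * g x t z * gy x t z) t := fun t ht => by
      simpa [mul_assoc] using (hdy x hx t ht z hz).fun_pow 2
    have hcont : ContinuousOn (fun t => 2 * g x t z * gy x t z) (Icc 0 L) :=
      (continuousOn_const.mul (continuousOn_slice_middle hg hx hz)).mul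
        (continuousOn_slice_middle hgy hx hz)
    simpa only [abs_mul, abs_two, mul_assoc, integral_const_mul] using
      le_add_setIntegral_Ioo_abs_deriv hderiv hcont hy hy₀
  have hcol : ∀ {y'}, y' ∈ Icc 0 L → IntegrableOn (fun z => g x y' z ^ 2) (Ioo (-h) 0) :=
    fun hy' => ((continuousOn_slice_last (continuousOn_sq hg) hx hy').integrableOn_Icc).mono_set
      Ioo_subset_Icc_self
  have hcross : IntegrableOn (fun z => 2 * ∫ t in Ioo 0 L, |g x t z| * |gy x t z|) (Ioo (-h) 0) :=
    ((continuousOn_const.mul (continuousOn_setIntegral_Ioo isCompact_Icc hD)).integrableOn_Icc)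
      |>.mono_set Ioo_subset_Icc_self
  calc columnSq h g x y
      ≤ ∫ z in Ioo (-h) 0, (g x y₀ z ^ 2 + 2 * ∫ t in Ioo 0 L, |g x t z| * |gy x t z|) :=
        setIntegral_mono_on (hcol hy) ((hcol hy₀).add hcross) measurableSet_Ioo
          fun z hz => hpointwise z (Ioo_subset_Icc_self hz)
    _ = columnSq h g x y₀ + 2 * ∫ t in Ioo 0 L, ∫ z in Ioo (-h) 0, |g x t z| * |gy x t z| := by
        rw [integral_add (hcol hy₀) hcross, integral_const_mul, setIntegral_Ioo_comm hD]
        rfl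
    _ ≤ majorant L h g gy x := by
        rw [sub_zero] at havg
        unfold majorant
        gcongr

lemma integral_majorant_le {g gy : ℝ → ℝ → ℝ → ℝ} (hg : ContinuousOn ↿g (Box L h))
    (hgy : ContinuousOn ↿gy (Box L h)) :
    ∫ x in Ioo 0 L, majorant L h g gy x ≤
      L⁻¹ * sqL2 L h g + 2 * (L2norm L h g * L2norm L h gy) := by
  have hint : ∀ {W : ℝ → ℝ → ℝ → ℝ}, ContinuousOn ↿W (Box L h) →
      IntegrableOn (fun x => ∫ t in Ioo 0 L, ∫ z in Ioo (-h) 0, W x t z) (Ioo 0 L) :=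
    fun hW => ((continuousOn_integral_last_two hW).integrableOn_Icc).mono_set Ioo_subset_Icc_self
  calc ∫ x in Ioo 0 L, majorant L h g gy x
      = L⁻¹ * sqL2 L h g + 2 * intM L h (fun x y z => |g x y z| * |gy x y z|) := by
        unfold majorant
        rw [integral_add, integral_const_mul, integral_const_mul]
        · rfl
        · exact (hint (continuousOn_sq hg)).const_mul _
        · exact (hint (hg.abs.mul hgy.abs)).const_mul _
    _ ≤ _ := by
        gcongr
        exact intM_abs_mul_abs_le hg hgy

lemma integral_columnSq_sq_le (hL : 0 < L) {g gx gy : ℝ → ℝ → ℝ → ℝ}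
    (hg : ContinuousOn ↿g (Box L h)) (hgx : ContinuousOn ↿gx (Box L h))
    (hgy : ContinuousOn ↿gy (Box L h))
    (hdx : ∀ x ∈ Icc 0 L, ∀ y ∈ Icc 0 L, ∀ z ∈ Icc (-h) 0,
      HasDerivAt (fun t => g t y z) (gx x y z) x)
    (hdy : ∀ x ∈ Icc 0 L, ∀ y ∈ Icc 0 L, ∀ z ∈ Icc (-h) 0,
      HasDerivAt (fun t => g x t z) (gy x y z) y) :
    ∫ x in Ioo 0 L, ∫ y in Ioo 0 L, columnSq h g x y ^ 2 ≤
      (L⁻¹ * sqL2 L h g + 2 * (L2norm L h g * L2norm L h gy)) *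
        (L⁻¹ * sqL2 L h g + 2 * (L2norm L h g * L2norm L h gx)) := by
  have hg' := continuousOn_swap hg
  have hgx' := continuousOn_swap hgx
  have hswapped := integral_majorant_le hg' hgx'
  rw [L2norm_swap hg, L2norm_swap hgx, show sqL2 L h _ = sqL2 L h g from
    intM_swap (continuousOn_sq hg)] at hswapped
  calc ∫ x in Ioo 0 L, ∫ y in Ioo 0 L, columnSq h g x y ^ 2
      ≤ (∫ x in Ioo 0 L, majorant L h g gy x) *
          ∫ y in Ioo 0 L, majorant L h (fun x y z => g y x z) (fun x y z => gx y x z) y :=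
        integral_Ioo_Ioo_sq_le_mul (continuousOn_integral_last (continuousOn_sq hg))
          (continuousOn_majorant hg hgy) (continuousOn_majorant hg' hgx')
          (fun _ _ _ _ => setIntegral_nonneg measurableSet_Ioo fun _ _ => sq_nonneg _)
          (fun _ hx _ hy => columnSq_le_majorant hL hg hgy hdy hx hy)
          (fun _ hx _ hy => columnSq_le_majorant hL hg' hgx'
            (fun a ha b hb z hz => hdx b hb a ha z hz) hy hx)
    _ ≤ _ := by
        gcongr
        · exact setIntegral_nonneg measurableSet_Ioo fun _ _ => majorant_nonneg hL.le _ _ _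
        · exact add_nonneg (mul_nonneg (inv_nonneg.2 hL.le) (sqL2_nonneg g))
            (mul_nonneg zero_le_two (mul_nonneg (Real.sqrt_nonneg _) (Real.sqrt_nonneg _)))
        · exact integral_majorant_le hg hgy

lemma anisotropic_estimate (hL : 0 < L) {g gx gy : ℝ → ℝ → ℝ → ℝ}
    (hg : ContinuousOn ↿g (Box L h)) (hgx : ContinuousOn ↿gx (Box L h))
    (hgy : ContinuousOn ↿gy (Box L h))
    (hdx : ∀ x ∈ Icc 0 L, ∀ y ∈ Icc 0 L, ∀ z ∈ Icc (-h) 0,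
      HasDerivAt (fun t => g t y z) (gx x y z) x)
    (hdy : ∀ x ∈ Icc 0 L, ∀ y ∈ Icc 0 L, ∀ z ∈ Icc (-h) 0,
      HasDerivAt (fun t => g x t z) (gy x y z) y)
    {N : ℝ} (hNg : L2norm L h g ≤ N) (hNx : L2norm L h gx ≤ N) (hNy : L2norm L h gy ≤ N) :
    (∫ x in Ioo 0 L, ∫ y in Ioo 0 L, columnSq h g x y ^ (4 / 3 : ℝ)) ^ (1 / 4 : ℝ) ≤
      (L⁻¹ + 2) ^ (1 / 6 : ℝ) * sqL2 L h g ^ (1 / 4 : ℝ) * N ^ (1 / 6 : ℝ) := by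
  set E := sqL2 L h g
  set e := L2norm L h g
  have hE : 0 ≤ E := sqL2_nonneg g
  have he : 0 ≤ e := Real.sqrt_nonneg _
  have hee : e * e = E := Real.mul_self_sqrt hE
  have hN : 0 ≤ N := he.trans hNg
  have hfactor : ∀ {N'}, N' ≤ N → L⁻¹ * E + 2 * (e * N') ≤ (L⁻¹ + 2) * (e * N) := fun hN' => by
    have : L⁻¹ * E ≤ L⁻¹ * (e * N) := by
      rw [← hee]; exact mul_le_mul_of_nonneg_left (mul_le_mul_of_nonneg_left hNg he) (by positivity)
    nlinarith [mul_le_mul_of_nonneg_left hN' he]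
  have hsq : ∫ x in Ioo 0 L, ∫ y in Ioo 0 L, columnSq h g x y ^ 2 ≤ (L⁻¹ + 2) ^ 2 * E * N ^ 2 :=
    calc _ ≤ (L⁻¹ * E + 2 * (e * L2norm L h gy)) * (L⁻¹ * E + 2 * (e * L2norm L h gx)) :=
          integral_columnSq_sq_le hL hg hgx hgy hdx hdy
      _ ≤ ((L⁻¹ + 2) * (e * N)) * ((L⁻¹ + 2) * (e * N)) :=
          mul_le_mul (hfactor hNy) (hfactor hNx)
            (add_nonneg (mul_nonneg (inv_nonneg.2 hL.le) hE)
              (mul_nonneg zero_le_two (mul_nonneg he (Real.sqrt_nonneg _)))) (by positivity)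
      _ = (L⁻¹ + 2) ^ 2 * E * N ^ 2 := by rw [← hee]; ring
  have hinterp := integral_Ioo_Ioo_rpow_four_thirds_le (H := columnSq h g)
    (continuousOn_integral_last (continuousOn_sq hg))
    (fun x _ y _ => columnSq_nonneg h g x y)
  rw [← rpow_interpolation_eq (by positivity) hE hN]
  refine Real.rpow_le_rpow (integral_nonneg fun x => integral_nonneg fun y =>
    Real.rpow_nonneg (columnSq_nonneg h g x y) _) (hinterp.trans ?_) (by norm_num)
  gcongr
  exact le_rfl

lemma closure_Mset (hL : 0 < L) (hh : 0 < h) : closure (Mset L h) = Box L h := by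
  rw [Mset, Box, closure_prod_eq, closure_prod_eq, closure_Ioo hL.ne,
    closure_Ioo (by linarith : -h ≠ 0)]

lemma L2norm_le_H1norm (W : ℝ → ℝ → ℝ → ℝ) :
    L2norm L h W ≤ H1norm L h W ∧ L2norm L h (pdx W) ≤ H1norm L h W ∧
      L2norm L h (pdy W) ≤ H1norm L h W := by
  have := sqL2_nonneg (L := L) (h := h) W
  have := sqL2_nonneg (L := L) (h := h) (pdx W)
  have := sqL2_nonneg (L := L) (h := h) (pdy W)
  have := sqL2_nonneg (L := L) (h := h) (pdz W)
  refine ⟨?_, ?_, ?_⟩ <;> exact Real.sqrt_le_sqrt (by unfold gradSq; linarith)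

lemma continuousOn_deriv_comp_line {E : Type*} [NormedAddCommGroup E] [NormedSpace ℝ E]
    {G : E → ℝ} {U : Set E} (hU : IsOpen U) (hG : ContDiffOn ℝ 1 G U) {ℓ : E → ℝ → E}
    {τ : E → ℝ} {v : E} (hℓ : ∀ p, HasDerivAt (ℓ p) v (τ p)) (hτ : ∀ p, ℓ p (τ p) = p) :
    ContinuousOn (fun p => deriv (G ∘ ℓ p) (τ p)) U := by
  refine ((hG.continuousOn_fderiv_of_isOpen hU le_rfl).clm_apply
    (continuousOn_const (c := v))).congr fun p hp => ?_
  have hGp : DifferentiableAt ℝ G (ℓ p (τ p)) :=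
    (hτ p).symm ▸ (hG.differentiableOn one_ne_zero).differentiableAt (hU.mem_nhds hp)
  simpa only [hτ] using (hGp.hasFDerivAt.comp_hasDerivAt (τ p) (hℓ p)).deriv

section Partials

variable {F : ℝ → ℝ → ℝ → ℝ} {U : Set (ℝ × ℝ × ℝ)}

lemma continuousOn_pdx (hU : IsOpen U) (hF : ContDiffOn ℝ 1 ↿F U) : ContinuousOn ↿(pdx F) U :=
  continuousOn_deriv_comp_line hU hF (ℓ := fun p t => (t, p.2.1, p.2.2)) (τ := Prod.fst)
    (fun p => (hasDerivAt_id p.1).prodMk (hasDerivAt_const p.1 p.2)) fun _ => rfl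

lemma continuousOn_pdy (hU : IsOpen U) (hF : ContDiffOn ℝ 1 ↿F U) : ContinuousOn ↿(pdy F) U :=
  continuousOn_deriv_comp_line hU hF (ℓ := fun p t => (p.1, t, p.2.2)) (τ := fun p => p.2.1)
    (fun p => (hasDerivAt_const p.2.1 p.1).prodMk
      ((hasDerivAt_id p.2.1).prodMk (hasDerivAt_const p.2.1 p.2.2))) fun _ => rfl

lemma hasDerivAt_pdx (hU : IsOpen U) (hF : ContDiffOn ℝ 1 ↿F U) {x y z : ℝ}
    (hp : (x, y, z) ∈ U) : HasDerivAt (fun t => F t y z) (pdx F x y z) x :=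
  (((hF.differentiableOn one_ne_zero).differentiableAt (hU.mem_nhds hp)).comp
    (f := fun t => (t, y, z)) x (by fun_prop)).hasDerivAt

lemma hasDerivAt_pdy (hU : IsOpen U) (hF : ContDiffOn ℝ 1 ↿F U) {x y z : ℝ}
    (hp : (x, y, z) ∈ U) : HasDerivAt (fun t => F x t z) (pdy F x y z) y :=
  (((hF.differentiableOn one_ne_zero).differentiableAt (hU.mem_nhds hp)).comp
    (f := fun t => (x, t, z)) y (by fun_prop)).hasDerivAt

end Partials

lemma anisoNorm_sq_eq (f : ℝ → ℝ → ℝ → ℝ) :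
    anisoNorm L h 4 3 (fun x y z => f x y z ^ 2) =
      (∫ x in Ioo 0 L, ∫ y in Ioo 0 L, columnSq h (fun x y z => f x y z ^ 3) x y ^ (4 / 3 : ℝ))
        ^ (1 / 4 : ℝ) := by
  have hpow : ∀ w : ℝ, |w ^ 2| ^ (3 : ℝ) = (w ^ 3) ^ 2 := fun w => by
    rw [abs_of_nonneg (sq_nonneg w), Real.rpow_ofNat]
    ring
  simp only [anisoNorm, columnSq, hpow]

lemma LpNorm_six_rpow_eq (f : ℝ → ℝ → ℝ → ℝ) :
    LpNorm L h 6 f ^ (3 / 2 : ℝ) = sqL2 L h (fun x y z => f x y z ^ 3) ^ (1 / 4 : ℝ) := by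
  have hpow : ∀ w : ℝ, |w| ^ (6 : ℝ) = (w ^ 3) ^ 2 := fun w => by
    rw [Real.rpow_ofNat, ← sq_abs, abs_pow]
    ring
  have hLp : LpNorm L h 6 f = sqL2 L h (fun x y z => f x y z ^ 3) ^ (1 / 6 : ℝ) := by
    simp only [LpNorm, sqL2, hpow]
  rw [hLp, ← Real.rpow_mul (sqL2_nonneg _)]
  norm_num

end AnisotropicEstimate

open AnisotropicEstimate in
/-- anisotropic estimate \eqref{eq:anis.5}:
there is `C > 0`, depending only on `M`, with
`|f²|_{L⁴_x L³_z} ≤ C |f|_{L⁶}^{3/2} ‖f³‖^{1/6}` for all `f` smooth near the closure of `M`. -/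
theorem stmt4 (L h : ℝ) (hL : 0 < L) (hh : 0 < h) :
    ∃ C : ℝ, 0 < C ∧
      ∀ f : ℝ → ℝ → ℝ → ℝ, SmoothNearM L h f →
        anisoNorm L h 4 3 (fun x y z => (f x y z) ^ 2) ≤
          C * LpNorm L h 6 f ^ ((3:ℝ) / 2) *
            H1norm L h (fun x y z => (f x y z) ^ 3) ^ ((1:ℝ) / 6) := by
  refine ⟨(L⁻¹ + 2) ^ (1 / 6 : ℝ), by positivity, fun f ⟨U, hU, hMU, hf⟩ => ?_⟩
  set g : ℝ → ℝ → ℝ → ℝ := fun x y z => f x y z ^ 3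
  have hBox : Box L h ⊆ U := closure_Mset hL hh ▸ hMU
  have hg : ContDiffOn ℝ 1 ↿g U := (hf.pow 3).of_le (by exact_mod_cast le_top)
  obtain ⟨hN, hNx, hNy⟩ := L2norm_le_H1norm (L := L) (h := h) g
  rw [anisoNorm_sq_eq, LpNorm_six_rpow_eq]
  exact anisotropic_estimate hL (hg.continuousOn.mono hBox)
    ((continuousOn_pdx hU hg).mono hBox) ((continuousOn_pdy hU hg).mono hBox)
    (fun _ hx _ hy _ hz => hasDerivAt_pdx hU hg (hBox ⟨hx, hy, hz⟩))
    (fun _ hx _ hy _ hz => hasDerivAt_pdy hU hg (hBox ⟨hx, hy, hz⟩)) hN hNx hNy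
end
end

section
/- There exists a constant C > 0, depending only on M, such that for every smooth function f on a neighbourhood of the closure of M one has |f|_{L^{12}_x L^6_z}^6 ≤ C (|f|_{L⁶}³ |∇₃(f³)|_{L²} + |f|_{L⁶}⁶), where f³ denotes the pointwise cube of f. -/
open MeasureTheory Set

noncomputable section

open Function

/-! For `g = f³` the estimate is the anisotropic Ladyzhenskaya inequality
`|g|²_{L⁴_x L²_z} ≤ L⁻¹ |g|² + 2 |g| |∇₃ g|`. Put `Q(x,y) = ∫ g² dz`. The fundamental theorem of
calculus in `x`, averaged over the starting point, bounds `Q(x,y)` by a function `a(y)` of `y`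
alone, and the same argument in `y` bounds it by a function `b(x)` of `x` alone; hence
`∫∫ Q² ≤ (∫ b)(∫ a)`. Since `∂(g²) = 2 g ∂g`, Cauchy–Schwarz bounds each of `∫ a`, `∫ b` by
`L⁻¹ |g|² + 2 |g| |∇₃ g|`. -/

theorem le_setIntegral_Ioo_of_hasDerivAt {a b : ℝ} (hab : a < b) {φ D : ℝ → ℝ}
    (hφ : IntegrableOn φ (Ioo a b)) (hD : IntegrableOn D (Ioo a b))
    (hderiv : ∀ t ∈ Ioo a b, HasDerivAt φ (D t) t) {x : ℝ} (hx : x ∈ Ioo a b) :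
    φ x ≤ ∫ t in Ioo a b, ((b - a)⁻¹ * φ t + |D t|) := by
  set V := ∫ t in Ioo a b, |D t|
  have hftc : ∀ t ∈ Ioo a b, φ x - V ≤ φ t := by
    intro t ht
    have hsub : uIcc t x ⊆ Ioo a b := ordConnected_Ioo.uIcc_subset ht hx
    have hint : IntervalIntegrable D volume t x := (hD.mono_set hsub).intervalIntegrable
    have h_le : φ x - φ t ≤ V := calc
      φ x - φ t = ∫ s in t..x, D s :=
        (intervalIntegral.integral_eq_sub_of_hasDerivAt (fun s hs => hderiv s (hsub hs)) hint).symm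
      _ ≤ ∫ s in uIoc t x, |D s| := (le_abs_self _).trans (by
        simpa using intervalIntegral.norm_integral_le_integral_norm_uIoc (f := D) (a := t) (b := x))
      _ ≤ V := setIntegral_mono_set hD.abs (.of_forall fun _ => abs_nonneg _)
            (uIoc_subset_uIcc.trans hsub).eventuallyLE
    linarith
  have hba : b - a ≠ 0 := sub_ne_zero.2 hab.ne'
  have hconst : IntegrableOn (fun _ => φ x - V) (Ioo a b) :=
    integrableOn_const measure_Ioo_lt_top.ne
  calc φ x = (b - a)⁻¹ * (∫ _ in Ioo a b, (φ x - V)) + V := by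
        rw [setIntegral_const, Real.volume_real_Ioo_of_le hab.le, smul_eq_mul]
        field_simp
        ring
    _ ≤ (b - a)⁻¹ * (∫ t in Ioo a b, φ t) + V := by
        have hmono := setIntegral_mono_on hconst hφ measurableSet_Ioo hftc
        gcongr (b - a)⁻¹ * ?_ + V
    _ = ∫ t in Ioo a b, ((b - a)⁻¹ * φ t + |D t|) := by
        rw [integral_add (hφ.const_mul _) hD.abs, integral_const_mul]

theorem integrable_prod_restrict_of_continuousOn {a b c d : ℝ} {F : ℝ × ℝ → ℝ}
    (hF : ContinuousOn F (Icc a b ×ˢ Icc c d)) :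
    Integrable F ((volume.restrict (Ioo a b)).prod (volume.restrict (Ioo c d))) := by
  rw [Measure.prod_restrict, ← Measure.volume_eq_prod]
  exact (hF.integrableOn_compact (isCompact_Icc.prod isCompact_Icc)).mono_set
    (prod_mono Ioo_subset_Icc_self Ioo_subset_Icc_self)

theorem setIntegral_Ioo_le_of_hasDerivAt {a b c d : ℝ} (hab : a < b) {φ D : ℝ → ℝ → ℝ}
    (hφ : ContinuousOn (uncurry φ) (Icc a b ×ˢ Icc c d))
    (hD : ContinuousOn (uncurry D) (Icc a b ×ˢ Icc c d))
    (hderiv : ∀ s ∈ Ioo a b, ∀ z ∈ Ioo c d, HasDerivAt (φ · z) (D s z) s)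
    {s : ℝ} (hs : s ∈ Ioo a b) :
    ∫ z in Ioo c d, φ s z ≤ ∫ s' in Ioo a b, ∫ z in Ioo c d, ((b - a)⁻¹ * φ s' z + |D s' z|) := by
  have hW : Integrable (uncurry fun s' z => (b - a)⁻¹ * φ s' z + |D s' z|)
      ((volume.restrict (Ioo a b)).prod (volume.restrict (Ioo c d))) :=
    integrable_prod_restrict_of_continuousOn ((continuousOn_const.mul hφ).add hD.abs)
  have hφz : ContinuousOn (φ s) (Icc c d) :=
    hφ.comp (continuousOn_const.prodMk continuousOn_id) fun z hz => ⟨Ioo_subset_Icc_self hs, hz⟩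
  have hφs : ∀ z ∈ Icc c d, ContinuousOn (φ · z) (Icc a b) := fun z hz =>
    hφ.comp (continuousOn_id.prodMk continuousOn_const) fun s' hs' => ⟨hs', hz⟩
  have hDs : ∀ z ∈ Icc c d, ContinuousOn (D · z) (Icc a b) := fun z hz =>
    hD.comp (continuousOn_id.prodMk continuousOn_const) fun s' hs' => ⟨hs', hz⟩
  calc ∫ z in Ioo c d, φ s z
      ≤ ∫ z in Ioo c d, ∫ s' in Ioo a b, ((b - a)⁻¹ * φ s' z + |D s' z|) :=
        setIntegral_mono_on (hφz.integrableOn_Icc.mono_set Ioo_subset_Icc_self)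
          hW.integral_prod_right measurableSet_Ioo fun z hz =>
          le_setIntegral_Ioo_of_hasDerivAt hab
            ((hφs z (Ioo_subset_Icc_self hz)).integrableOn_Icc.mono_set Ioo_subset_Icc_self)
            ((hDs z (Ioo_subset_Icc_self hz)).integrableOn_Icc.mono_set Ioo_subset_Icc_self)
            (fun s' hs' => hderiv s' hs' z hz) hs
    _ = _ := (integral_integral_swap hW).symm

theorem setIntegral_setIntegral_sq_le_mul {α β : Type*} [MeasurableSpace α] [MeasurableSpace β]
    {μ : Measure α} {ν : Measure β} {s : Set α} {t : Set β} (hs : MeasurableSet s)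
    (ht : MeasurableSet t) {F : α → β → ℝ} {A : β → ℝ} {B : α → ℝ}
    (hA : IntegrableOn A t ν) (hB : IntegrableOn B s μ)
    (hF₀ : ∀ x ∈ s, ∀ y ∈ t, 0 ≤ F x y) (hFA : ∀ x ∈ s, ∀ y ∈ t, F x y ≤ A y)
    (hFB : ∀ x ∈ s, ∀ y ∈ t, F x y ≤ B x) :
    ∫ x in s, ∫ y in t, F x y ^ 2 ∂ν ∂μ ≤ (∫ x in s, B x ∂μ) * ∫ y in t, A y ∂ν := by
  have hinner : ∀ x ∈ s, ∫ y in t, F x y ^ 2 ∂ν ≤ B x * ∫ y in t, A y ∂ν := fun x hx => by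
    rw [← integral_const_mul]
    refine integral_mono_of_nonneg (.of_forall fun y => sq_nonneg _) (hA.const_mul _)
      (ae_restrict_of_forall_mem ht fun y hy => ?_)
    dsimp only
    rw [sq]
    exact mul_le_mul (hFB x hx y hy) (hFA x hx y hy) (hF₀ x hx y hy)
      ((hF₀ x hx y hy).trans (hFB x hx y hy))
  rw [← integral_mul_const]
  exact integral_mono_of_nonneg (.of_forall fun x => integral_nonneg fun y => sq_nonneg _)
    (hB.mul_const _) (ae_restrict_of_forall_mem hs hinner)

theorem integral_abs_mul_le_sqrt_mul_sqrt {α : Type*} [MeasurableSpace α] {μ : Measure α}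
    {u v : α → ℝ} (hu : MemLp u 2 μ) (hv : MemLp v 2 μ) :
    ∫ a, |u a * v a| ∂μ ≤ √(∫ a, u a ^ 2 ∂μ) * √(∫ a, v a ^ 2 ∂μ) := by
  have h := integral_mul_norm_le_Lp_mul_Lq (f := u) (g := v) Real.HolderConjugate.two_two
    (by rwa [ENNReal.ofReal_ofNat]) (by rwa [ENNReal.ofReal_ofNat] : MemLp v _ μ)
  simp only [Real.norm_eq_abs, ← abs_mul, Real.rpow_two, sq_abs, ← Real.sqrt_eq_rpow] at h
  exact h

def Mbar (L h : ℝ) : Set (ℝ × ℝ × ℝ) := Icc 0 L ×ˢ Icc 0 L ×ˢ Icc (-h) 0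

theorem closure_Mset {L h : ℝ} (hL : 0 < L) (hh : 0 < h) : closure (Mset L h) = Mbar L h := by
  rw [Mset, Mbar, closure_prod_eq, closure_prod_eq, closure_Ioo hL.ne, closure_Ioo (by linarith)]

theorem Mset_subset_Mbar (L h : ℝ) : Mset L h ⊆ Mbar L h :=
  prod_mono Ioo_subset_Icc_self (prod_mono Ioo_subset_Icc_self Ioo_subset_Icc_self)

section Box

variable {L h : ℝ} {V : ℝ × ℝ × ℝ → ℝ}

theorem integrableOn_Mset_of_continuousOn (hV : ContinuousOn V (Mbar L h)) :
    IntegrableOn V (Mset L h) :=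
  (hV.integrableOn_compact (isCompact_Icc.prod (isCompact_Icc.prod isCompact_Icc))).mono_set
    (Mset_subset_Mbar L h)

theorem volume_restrict_Mset (L h : ℝ) : volume.restrict (Mset L h) =
    (volume.restrict (Ioo 0 L)).prod
      ((volume.restrict (Ioo 0 L)).prod (volume.restrict (Ioo (-h) 0))) := by
  rw [Measure.prod_restrict, Measure.prod_restrict, ← Measure.volume_eq_prod,
    ← Measure.volume_eq_prod, Mset]

theorem setIntegral_Mset (hV : IntegrableOn V (Mset L h)) :
    ∫ p in Mset L h, V p = ∫ x in Ioo 0 L, ∫ y in Ioo 0 L, ∫ z in Ioo (-h) 0, V (x, y, z) := by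
  rw [IntegrableOn, volume_restrict_Mset] at hV
  rw [volume_restrict_Mset, integral_prod _ hV]
  exact integral_congr_ae (hV.prod_right_ae.mono fun x hx => integral_prod _ hx)

theorem integrable_setIntegral_Ioo_z (hV : IntegrableOn V (Mset L h)) :
    Integrable (fun q : ℝ × ℝ => ∫ z in Ioo (-h) 0, V (q.1, q.2, z))
      ((volume.restrict (Ioo 0 L)).prod (volume.restrict (Ioo 0 L))) := by
  rw [IntegrableOn, volume_restrict_Mset] at hV
  exact (((measurePreserving_prodAssoc _ _ _).integrable_comp_emb
    MeasurableEquiv.prodAssoc.measurableEmbedding).2 hV).integral_prod_left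

theorem setIntegral_Mset_eq_swap (hV : IntegrableOn V (Mset L h)) :
    ∫ p in Mset L h, V p = ∫ y in Ioo 0 L, ∫ x in Ioo 0 L, ∫ z in Ioo (-h) 0, V (x, y, z) :=
  (setIntegral_Mset hV).trans (integral_integral_swap (integrable_setIntegral_Ioo_z hV))

end Box

section Smooth

variable {U : Set (ℝ × ℝ × ℝ)} {g : ℝ → ℝ → ℝ → ℝ}

theorem hasDerivAt_x_of_contDiffOn (hU : IsOpen U) (hg : ContDiffOn ℝ 1 ↿g U)
    {p : ℝ × ℝ × ℝ} (hp : p ∈ U) :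
    HasDerivAt (fun t => g t p.2.1 p.2.2) (fderiv ℝ ↿g p (1, 0, 0)) p.1 := by
  have hline : HasDerivAt (fun t : ℝ => (t, p.2.1, p.2.2)) ((1 : ℝ), (0 : ℝ), (0 : ℝ)) p.1 :=
    (hasDerivAt_id _).prodMk (hasDerivAt_const _ _)
  exact ((hg.contDiffAt (hU.mem_nhds hp)).differentiableAt one_ne_zero).hasFDerivAt.comp_hasDerivAt
    p.1 hline

theorem hasDerivAt_y_of_contDiffOn (hU : IsOpen U) (hg : ContDiffOn ℝ 1 ↿g U)
    {p : ℝ × ℝ × ℝ} (hp : p ∈ U) :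
    HasDerivAt (fun t => g p.1 t p.2.2) (fderiv ℝ ↿g p (0, 1, 0)) p.2.1 := by
  have hline : HasDerivAt (fun t : ℝ => (p.1, t, p.2.2)) ((0 : ℝ), (1 : ℝ), (0 : ℝ)) p.2.1 :=
    (hasDerivAt_const _ _).prodMk ((hasDerivAt_id _).prodMk (hasDerivAt_const _ _))
  exact ((hg.contDiffAt (hU.mem_nhds hp)).differentiableAt one_ne_zero).hasFDerivAt.comp_hasDerivAt
    p.2.1 hline

theorem continuousOn_pdx_of_contDiffOn (hU : IsOpen U) (hg : ContDiffOn ℝ 1 ↿g U) :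
    ContinuousOn ↿(pdx g) U :=
  ((hg.continuousOn_fderiv_of_isOpen hU le_rfl).clm_apply continuousOn_const).congr
    fun _ hp => (hasDerivAt_x_of_contDiffOn hU hg hp).deriv

theorem continuousOn_pdy_of_contDiffOn (hU : IsOpen U) (hg : ContDiffOn ℝ 1 ↿g U) :
    ContinuousOn ↿(pdy g) U :=
  ((hg.continuousOn_fderiv_of_isOpen hU le_rfl).clm_apply continuousOn_const).congr
    fun _ hp => (hasDerivAt_y_of_contDiffOn hU hg hp).deriv

end Smooth

theorem SmoothNearM.pow {L h : ℝ} {f : ℝ → ℝ → ℝ → ℝ} (hf : SmoothNearM L h f) (n : ℕ) :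
    SmoothNearM L h fun x y z => f x y z ^ n := by
  obtain ⟨U, hU, hMU, hfU⟩ := hf
  exact ⟨U, hU, hMU, hfU.pow n⟩

theorem abs_rpow_six (a : ℝ) : |a| ^ (6 : ℝ) = (a ^ 3) ^ 2 := by
  rw [show (6 : ℝ) = (6 : ℕ) by norm_num, Real.rpow_natCast, pow_abs,
    abs_of_nonneg (by positivity)]
  ring

section Norms

variable {L h : ℝ}

theorem anisoNorm_four_two_sq (g : ℝ → ℝ → ℝ → ℝ) :
    anisoNorm L h 4 2 g ^ 2 =
      √(∫ x in Ioo 0 L, ∫ y in Ioo 0 L, (∫ z in Ioo (-h) 0, g x y z ^ 2) ^ 2) := by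
  have hS : 0 ≤ ∫ x in Ioo 0 L, ∫ y in Ioo 0 L, (∫ z in Ioo (-h) 0, g x y z ^ 2) ^ 2 :=
    integral_nonneg fun _ => integral_nonneg fun _ => sq_nonneg _
  simp only [anisoNorm, Real.rpow_two, sq_abs, show (4 : ℝ) / 2 = 2 by norm_num]
  rw [← Real.rpow_natCast, ← Real.rpow_mul hS, Real.sqrt_eq_rpow]
  norm_num

theorem anisoNorm_twelve_six_pow_six (f : ℝ → ℝ → ℝ → ℝ) :
    anisoNorm L h 12 6 f ^ 6 = anisoNorm L h 4 2 (fun x y z => f x y z ^ 3) ^ 2 := by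
  have hS : 0 ≤ ∫ x in Ioo 0 L, ∫ y in Ioo 0 L, (∫ z in Ioo (-h) 0, (f x y z ^ 3) ^ 2) ^ 2 :=
    integral_nonneg fun _ => integral_nonneg fun _ => sq_nonneg _
  rw [anisoNorm_four_two_sq]
  simp only [anisoNorm, abs_rpow_six, show (12 : ℝ) / 6 = 2 by norm_num, Real.rpow_two]
  rw [← Real.rpow_natCast, ← Real.rpow_mul hS, Real.sqrt_eq_rpow]
  norm_num

theorem LpNorm_six (f : ℝ → ℝ → ℝ → ℝ) :
    LpNorm L h 6 f = sqL2 L h (fun x y z => f x y z ^ 3) ^ (1 / 6 : ℝ) := by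
  simp only [LpNorm, sqL2, abs_rpow_six]

theorem sqL2_nonneg (L h : ℝ) (g : ℝ → ℝ → ℝ → ℝ) : 0 ≤ sqL2 L h g :=
  integral_nonneg fun _ => integral_nonneg fun _ => integral_nonneg fun _ => sq_nonneg _

theorem LpNorm_six_pow_three (f : ℝ → ℝ → ℝ → ℝ) :
    LpNorm L h 6 f ^ 3 = L2norm L h (fun x y z => f x y z ^ 3) := by
  rw [LpNorm_six, L2norm, ← Real.rpow_natCast, ← Real.rpow_mul (sqL2_nonneg _ _ _),
    Real.sqrt_eq_rpow]
  norm_num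

theorem LpNorm_six_pow_six (f : ℝ → ℝ → ℝ → ℝ) :
    LpNorm L h 6 f ^ 6 = sqL2 L h (fun x y z => f x y z ^ 3) := by
  rw [LpNorm_six, ← Real.rpow_natCast, ← Real.rpow_mul (sqL2_nonneg _ _ _)]
  norm_num

end Norms

section Core

variable {L h : ℝ} {g : ℝ → ℝ → ℝ → ℝ}

theorem setIntegral_Mset_sq (hg : ContinuousOn ↿g (Mbar L h)) :
    ∫ p in Mset L h, ↿g p ^ 2 = sqL2 L h g :=
  setIntegral_Mset (integrableOn_Mset_of_continuousOn (hg.fun_pow 2))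

theorem memLp_two_Mset (hg : ContinuousOn ↿g (Mbar L h)) :
    MemLp ↿g 2 (volume.restrict (Mset L h)) :=
  (memLp_two_iff_integrable_sq ((hg.mono (Mset_subset_Mbar L h)).aestronglyMeasurable
    (measurableSet_Ioo.prod (measurableSet_Ioo.prod measurableSet_Ioo)))).2
    (integrableOn_Mset_of_continuousOn (hg.fun_pow 2))

theorem setIntegral_Mset_sq_add_abs_le (hg : ContinuousOn ↿g (Mbar L h))
    {v : ℝ → ℝ → ℝ → ℝ} (hv : ContinuousOn ↿v (Mbar L h)) :
    ∫ p in Mset L h, (L⁻¹ * ↿g p ^ 2 + |2 * ↿g p * ↿v p|)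
      ≤ L⁻¹ * sqL2 L h g + 2 * L2norm L h g * √(sqL2 L h v) := by
  have hg2 : IntegrableOn (fun p => ↿g p ^ 2) (Mset L h) :=
    integrableOn_Mset_of_continuousOn (hg.fun_pow 2)
  have hgv : IntegrableOn (fun p => |↿g p * ↿v p|) (Mset L h) :=
    integrableOn_Mset_of_continuousOn (hg.mul hv).abs
  have habs : ∀ p, |2 * ↿g p * ↿v p| = 2 * |↿g p * ↿v p| := fun p => by
    rw [mul_assoc, abs_mul, abs_two]
  simp only [habs]
  rw [integral_add (hg2.const_mul _) (hgv.const_mul _), integral_const_mul, integral_const_mul,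
    setIntegral_Mset_sq hg, mul_assoc 2, L2norm, ← setIntegral_Mset_sq hg, ← setIntegral_Mset_sq hv]
  gcongr
  exact integral_abs_mul_le_sqrt_mul_sqrt (memLp_two_Mset hg) (memLp_two_Mset hv)

theorem sqrt_sqL2_pdx_le_gradL2 : √(sqL2 L h (pdx g)) ≤ gradL2 L h g := by
  refine Real.sqrt_le_sqrt ?_
  unfold gradSq
  linarith [sqL2_nonneg L h (pdy g), sqL2_nonneg L h (pdz g)]

theorem sqrt_sqL2_pdy_le_gradL2 : √(sqL2 L h (pdy g)) ≤ gradL2 L h g := by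
  refine Real.sqrt_le_sqrt ?_
  unfold gradSq
  linarith [sqL2_nonneg L h (pdx g), sqL2_nonneg L h (pdz g)]

theorem hasDerivAt_sq_of_differentiableAt {φ : ℝ → ℝ} {t : ℝ} (hφ : DifferentiableAt ℝ φ t) :
    HasDerivAt (fun s => φ s ^ 2) (2 * φ t * deriv φ t) t :=
  (hφ.hasDerivAt.fun_pow 2).congr_deriv (by norm_num)

theorem setIntegral_z_sq_le_integral_x (hL : 0 < L) (hg : ContinuousOn ↿g (Mbar L h))
    (hgx : ContinuousOn ↿(pdx g) (Mbar L h))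
    (hdx : ∀ p ∈ Mset L h, DifferentiableAt ℝ (fun t => g t p.2.1 p.2.2) p.1)
    {x y : ℝ} (hx : x ∈ Ioo 0 L) (hy : y ∈ Ioo 0 L) :
    ∫ z in Ioo (-h) 0, g x y z ^ 2
      ≤ ∫ x' in Ioo 0 L, ∫ z in Ioo (-h) 0,
          (L⁻¹ * g x' y z ^ 2 + |2 * g x' y z * pdx g x' y z|) := by
  have hmaps : MapsTo (fun q : ℝ × ℝ => (q.1, y, q.2)) (Icc 0 L ×ˢ Icc (-h) 0) (Mbar L h) :=
    fun q hq => ⟨hq.1, Ioo_subset_Icc_self hy, hq.2⟩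
  have hgs : ContinuousOn (fun q : ℝ × ℝ => g q.1 y q.2) (Icc 0 L ×ˢ Icc (-h) 0) :=
    hg.comp (by fun_prop) hmaps
  have hgxs : ContinuousOn (fun q : ℝ × ℝ => pdx g q.1 y q.2) (Icc 0 L ×ˢ Icc (-h) 0) :=
    hgx.comp (by fun_prop) hmaps
  simpa only [sub_zero] using setIntegral_Ioo_le_of_hasDerivAt (φ := fun s z => g s y z ^ 2)
    (D := fun s z => 2 * g s y z * pdx g s y z) hL (hgs.fun_pow 2)
    ((continuousOn_const.fun_mul hgs).fun_mul hgxs)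
    (fun s hs z hz => hasDerivAt_sq_of_differentiableAt (hdx (s, y, z) ⟨hs, hy, hz⟩)) hx

theorem setIntegral_z_sq_le_integral_y (hL : 0 < L) (hg : ContinuousOn ↿g (Mbar L h))
    (hgy : ContinuousOn ↿(pdy g) (Mbar L h))
    (hdy : ∀ p ∈ Mset L h, DifferentiableAt ℝ (fun t => g p.1 t p.2.2) p.2.1)
    {x y : ℝ} (hx : x ∈ Ioo 0 L) (hy : y ∈ Ioo 0 L) :
    ∫ z in Ioo (-h) 0, g x y z ^ 2
      ≤ ∫ y' in Ioo 0 L, ∫ z in Ioo (-h) 0,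
          (L⁻¹ * g x y' z ^ 2 + |2 * g x y' z * pdy g x y' z|) := by
  have hmaps : MapsTo (fun q : ℝ × ℝ => (x, q.1, q.2)) (Icc 0 L ×ˢ Icc (-h) 0) (Mbar L h) :=
    fun q hq => ⟨Ioo_subset_Icc_self hx, hq.1, hq.2⟩
  have hgs : ContinuousOn (fun q : ℝ × ℝ => g x q.1 q.2) (Icc 0 L ×ˢ Icc (-h) 0) :=
    hg.comp (by fun_prop) hmaps
  have hgys : ContinuousOn (fun q : ℝ × ℝ => pdy g x q.1 q.2) (Icc 0 L ×ˢ Icc (-h) 0) :=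
    hgy.comp (by fun_prop) hmaps
  simpa only [sub_zero] using setIntegral_Ioo_le_of_hasDerivAt (φ := fun s z => g x s z ^ 2)
    (D := fun s z => 2 * g x s z * pdy g x s z) hL (hgs.fun_pow 2)
    ((continuousOn_const.fun_mul hgs).fun_mul hgys)
    (fun s hs z hz => hasDerivAt_sq_of_differentiableAt (hdy (x, s, z) ⟨hx, hs, hz⟩)) hy

end Core

theorem anisoNorm_four_two_sq_le {L h : ℝ} (hL : 0 < L) {g : ℝ → ℝ → ℝ → ℝ}
    (hg : ContinuousOn ↿g (Mbar L h)) (hgx : ContinuousOn ↿(pdx g) (Mbar L h))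
    (hgy : ContinuousOn ↿(pdy g) (Mbar L h))
    (hdx : ∀ p ∈ Mset L h, DifferentiableAt ℝ (fun t => g t p.2.1 p.2.2) p.1)
    (hdy : ∀ p ∈ Mset L h, DifferentiableAt ℝ (fun t => g p.1 t p.2.2) p.2.1) :
    anisoNorm L h 4 2 g ^ 2 ≤ L⁻¹ * sqL2 L h g + 2 * L2norm L h g * gradL2 L h g := by
  set E := L⁻¹ * sqL2 L h g + 2 * L2norm L h g * gradL2 L h g
  set Wx : ℝ × ℝ × ℝ → ℝ := fun p => L⁻¹ * ↿g p ^ 2 + |2 * ↿g p * ↿(pdx g) p|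
  set Wy : ℝ × ℝ × ℝ → ℝ := fun p => L⁻¹ * ↿g p ^ 2 + |2 * ↿g p * ↿(pdy g) p|
  have hWx : IntegrableOn Wx (Mset L h) := integrableOn_Mset_of_continuousOn
    ((continuousOn_const.fun_mul (hg.fun_pow 2)).add
      ((continuousOn_const.fun_mul hg).fun_mul hgx).abs)
  have hWy : IntegrableOn Wy (Mset L h) := integrableOn_Mset_of_continuousOn
    ((continuousOn_const.fun_mul (hg.fun_pow 2)).add
      ((continuousOn_const.fun_mul hg).fun_mul hgy).abs)
  have hprod := setIntegral_setIntegral_sq_le_mul measurableSet_Ioo measurableSet_Ioo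
    (integrable_setIntegral_Ioo_z hWx).integral_prod_right
    (integrable_setIntegral_Ioo_z hWy).integral_prod_left
    (fun x _ y _ => integral_nonneg fun z => sq_nonneg (g x y z))
    (fun x hx y hy => setIntegral_z_sq_le_integral_x hL hg hgx hdx hx hy)
    (fun x hx y hy => setIntegral_z_sq_le_integral_y hL hg hgy hdy hx hy)
  rw [← setIntegral_Mset hWy, ← setIntegral_Mset_eq_swap hWx] at hprod
  have hEx : ∫ p in Mset L h, Wx p ≤ E := (setIntegral_Mset_sq_add_abs_le hg hgx).trans
    (add_le_add le_rfl (mul_le_mul_of_nonneg_left sqrt_sqL2_pdx_le_gradL2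
      (mul_nonneg zero_le_two (Real.sqrt_nonneg _))))
  have hEy : ∫ p in Mset L h, Wy p ≤ E := (setIntegral_Mset_sq_add_abs_le hg hgy).trans
    (add_le_add le_rfl (mul_le_mul_of_nonneg_left sqrt_sqL2_pdy_le_gradL2
      (mul_nonneg zero_le_two (Real.sqrt_nonneg _))))
  have hWy₀ : 0 ≤ ∫ p in Mset L h, Wy p := integral_nonneg fun p => by positivity
  rw [anisoNorm_four_two_sq, ← Real.sqrt_mul_self (hWy₀.trans hEy)]
  exact Real.sqrt_le_sqrt (hprod.trans (mul_le_mul hEy hEx (integral_nonneg fun p => by positivity)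
    (hWy₀.trans hEy)))

/-- estimate \eqref{eq:ct63}:
there is `C > 0`, depending only on `M`, with
`|f|_{L^{12}_x L^6_z}⁶ ≤ C (|f|_{L⁶}³ |∇₃(f³)|_{L²} + |f|_{L⁶}⁶)`
for all `f` smooth near the closure of `M`. -/
theorem stmt5 (L h : ℝ) (hL : 0 < L) (hh : 0 < h) :
    ∃ C : ℝ, 0 < C ∧
      ∀ f : ℝ → ℝ → ℝ → ℝ, SmoothNearM L h f →
        anisoNorm L h 12 6 f ^ 6 ≤
          C * (LpNorm L h 6 f ^ 3 * gradL2 L h (fun x y z => (f x y z) ^ 3)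
            + LpNorm L h 6 f ^ 6) := by
  refine ⟨2 + L⁻¹, by positivity, fun f hf => ?_⟩
  obtain ⟨U, hU, hMU, hgU⟩ := hf.pow 3
  rw [closure_Mset hL hh] at hMU
  have hg : ContDiffOn ℝ 1 ↿(fun x y z => f x y z ^ 3) U := hgU.of_le (by norm_num)
  have hMsetU : ∀ p ∈ Mset L h, p ∈ U := fun p hp => hMU (Mset_subset_Mbar L h hp)
  have hbound := anisoNorm_four_two_sq_le hL (hg.continuousOn.mono hMU)
    ((continuousOn_pdx_of_contDiffOn hU hg).mono hMU)
    ((continuousOn_pdy_of_contDiffOn hU hg).mono hMU)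
    (fun p hp => (hasDerivAt_x_of_contDiffOn hU hg (hMsetU p hp)).differentiableAt)
    (fun p hp => (hasDerivAt_y_of_contDiffOn hU hg (hMsetU p hp)).differentiableAt)
  rw [anisoNorm_twelve_six_pow_six, LpNorm_six_pow_three, LpNorm_six_pow_six]
  have hNG : 0 ≤ L2norm L h (fun x y z => f x y z ^ 3) * gradL2 L h (fun x y z => f x y z ^ 3) :=
    mul_nonneg (Real.sqrt_nonneg _) (Real.sqrt_nonneg _)
  linarith [sqL2_nonneg L h fun x y z => f x y z ^ 3, mul_nonneg (inv_nonneg.2 hL.le) hNG]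
end
end
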